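/- (Generalized recurrence for higher-order Sobolev orthogonal polynomials.) For every n ≥ 0 one has 𝒢^m p_{n+1} = s̃_{n+m+1} + Σ_{ℓ=0}^{2m−1} a_{n,ℓ}·s̃_{n+m−ℓ}, where a_{n,ℓ} = ⟨𝒢^m p_{n+1}, s̃_{n+m−ℓ}⟩_{S^m}/‖s̃_{n+m−ℓ}‖_{S^m}² whenever n+m−ℓ ≥ 0, and the term with index n+m−ℓ < 0 is interpreted as 0 (since s̃_j = 0 for j < 0). -/

import Mathlib

/-! `𝒢ᵐ p_{n+1}` is monic of degree `n+m+1`: `𝒢` raises degrees by one, and `Δ𝒢 = id` forces the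
new leading coefficient to be `1`. Hence `𝒢ᵐ p_{n+1} - s̃_{n+m+1}` lies in `W_{n+m}` and equals its
Fourier expansion in the `Sᵐ`-orthogonal basis `s̃_0, …, s̃_{n+m}`. For `ℓ ≤ m` we have
`Δ^ℓ 𝒢ᵐ = 𝒢^{m-ℓ}`, and `𝒢` is symmetric, so `⟨𝒢ᵐ p_{n+1}, w⟩_{Sᵐ}` is a sum of `L²`-products of
`p_{n+1}` with polynomials of degree at most `deg w + m`. These vanish once `deg w + m ≤ n`, which
leaves only the `2m` coefficients of `s̃_{n+m}, …, s̃_{n+1-m}`. -/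

open Filter RealInnerProductSpace

variable {H : Type*} [NormedAddCommGroup H] [InnerProductSpace ℝ H]

/-- `Wlt P n` is the span of `P 0, …, P (n-1)`; thus `Wlt P 0 = ⊥ = W_{-1}` and
`Wlt P (n+1)` is the space `W_n = span{P_0, …, P_n}`. -/
def Wlt (P : ℕ → H) (n : ℕ) : Submodule ℝ H := Submodule.span ℝ (P '' Set.Iio n)

/-- `Wtot P` is the space `W = ⋃ₙ Wₙ` of all polynomials. -/
def Wtot (P : ℕ → H) : Submodule ℝ H := Submodule.span ℝ (Set.range P)

/-- The order-`m` Sobolev inner product `⟨f, g⟩_{Sᵐ} = Σ_{ℓ=0}^m χ_ℓ ⟨Δ^ℓ f, Δ^ℓ g⟩₂`. -/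
noncomputable def innerSm (Δ : H →ₗ[ℝ] H) (χ : ℕ → ℝ) (m : ℕ) (f g : H) : ℝ :=
  ∑ ℓ ∈ Finset.range (m + 1), χ ℓ * ⟪ (Δ ^ ℓ) f, (Δ ^ ℓ) g ⟫

lemma LinearMap.BilinForm.eq_sum_of_mem_span {K M ι : Type*} [Field K] [AddCommGroup M]
    [Module K M] (B : LinearMap.BilinForm K M) {e : ι → M} (horth : Pairwise fun i j => B (e i) (e j) = 0)
    (hself : ∀ i, B (e i) (e i) ≠ 0) {s : Finset ι} {f : M}
    (hf : f ∈ Submodule.span K (e '' s)) :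
    f = ∑ j ∈ s, (B f (e j) / B (e j) (e j)) • e j := by
  induction hf using Submodule.span_induction with
  | mem x hx =>
    obtain ⟨k, hk, rfl⟩ := hx
    rw [Finset.sum_eq_single_of_mem k hk fun j _ hjk => by rw [horth hjk.symm, zero_div, zero_smul],
      div_self (hself k), one_smul]
  | zero => simp
  | add x y _ _ hx hy =>
    conv_lhs => rw [hx, hy]
    simp only [map_add, LinearMap.add_apply, add_div, add_smul, Finset.sum_add_distrib]
  | smul c x _ hx =>
    conv_lhs => rw [hx]
    simp only [map_smul, LinearMap.smul_apply, smul_eq_mul, mul_div_assoc, Finset.smul_sum,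
      smul_smul]

lemma Finset.sum_range_eq_sum_range_reflect_of_eq_zero {M : Type*} [AddCommMonoid M] (g : ℕ → M)
    (n m : ℕ) (hg : ∀ j, j + m ≤ n → g j = 0) :
    ∑ j ∈ range (n + m + 1), g j =
      ∑ ℓ ∈ range (2 * m), if ℓ ≤ n + m then g (n + m - ℓ) else 0 := by
  set f : ℕ → M := fun ℓ => if ℓ ≤ n + m then g (n + m - ℓ) else 0 with hf
  have hsupp : ∀ ℓ, f ℓ ≠ 0 → ℓ < n + m + 1 ∧ ℓ < 2 * m := by
    intro ℓ hℓ
    by_cases h : ℓ ≤ n + m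
    · refine ⟨by omega, not_le.1 fun h2m => hℓ ?_⟩
      simp only [hf, if_pos h]
      exact hg _ (by omega)
    · simp [hf, h] at hℓ
  have hextend : ∀ a ≤ n + m + 1 + 2 * m, (∀ ℓ, f ℓ ≠ 0 → ℓ < a) →
      ∑ ℓ ∈ range a, f ℓ = ∑ ℓ ∈ range (n + m + 1 + 2 * m), f ℓ := fun a haN ha =>
    sum_subset (range_subset_range.2 haN) fun ℓ _ hℓ => by
      by_contra h
      exact hℓ (mem_range.2 (ha ℓ h))
  calc ∑ j ∈ range (n + m + 1), g j
      = ∑ ℓ ∈ range (n + m + 1), f ℓ := by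
        rw [← sum_range_reflect]
        refine sum_congr rfl fun ℓ hℓ => ?_
        rw [mem_range] at hℓ
        simp only [hf, if_pos (Nat.lt_succ_iff.1 hℓ), Nat.add_sub_cancel]
    _ = ∑ ℓ ∈ range (n + m + 1 + 2 * m), f ℓ := hextend _ (by omega) fun ℓ h => (hsupp ℓ h).1
    _ = ∑ ℓ ∈ range (2 * m), f ℓ := (hextend _ (by omega) fun ℓ h => (hsupp ℓ h).2).symm

section Wlt

variable {P : ℕ → H}

lemma Wlt_mono (P : ℕ → H) : Monotone (Wlt P) := fun _ _ h =>
  Submodule.span_mono (Set.image_mono fun _ hx => lt_of_lt_of_le hx h)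

lemma apply_mem_Wlt (P : ℕ → H) {j n : ℕ} (h : j < n) : P j ∈ Wlt P n :=
  Submodule.subset_span ⟨j, h, rfl⟩

lemma Wlt_le_Wtot (P : ℕ → H) (n : ℕ) : Wlt P n ≤ Wtot P :=
  Submodule.span_mono (Set.image_subset_range P _)

lemma Wlt_zero (P : ℕ → H) : Wlt P 0 = ⊥ := by
  simp [Wlt]

lemma apply_notMem_Wlt (hP : LinearIndependent ℝ P) (n : ℕ) : P n ∉ Wlt P n :=
  hP.notMem_span_image (lt_irrefl n)

lemma exists_mem_Wlt_of_mem_Wtot {u : H} (hu : u ∈ Wtot P) : ∃ n, u ∈ Wlt P n := by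
  have hu' : u ∈ ⨆ n, Wlt P n := by
    refine Submodule.span_le.2 ?_ hu
    rintro _ ⟨j, rfl⟩
    exact Submodule.mem_iSup_of_mem (j + 1) (apply_mem_Wlt P j.lt_succ_self)
  exact (Submodule.mem_iSup_of_directed _ (Wlt_mono P).directed_le).1 hu'

lemma mem_Wlt_succ_of_sub_mem {u : H} {k : ℕ} (hu : u - P k ∈ Wlt P k) :
    u ∈ Wlt P (k + 1) := by
  simpa using add_mem (Wlt_mono P k.le_succ hu) (apply_mem_Wlt P k.lt_succ_self)

lemma ne_zero_of_sub_mem_Wlt (hP : LinearIndependent ℝ P) {u : H} {k : ℕ}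
    (hu : u - P k ∈ Wlt P k) : u ≠ 0 := by
  rintro rfl
  exact apply_notMem_Wlt hP k (by simpa using neg_mem hu)

lemma Wlt_le_span_of_sub_mem {e : ℕ → H} (he : ∀ n, e n - P n ∈ Wlt P n) (N : ℕ) :
    Wlt P N ≤ Submodule.span ℝ (e '' Set.Iio N) := by
  induction N with
  | zero => simp [Wlt_zero]
  | succ N ih =>
    have hmono : Submodule.span ℝ (e '' Set.Iio N) ≤ Submodule.span ℝ (e '' Set.Iio (N + 1)) :=
      Submodule.span_mono (Set.image_mono (Set.Iio_subset_Iio N.le_succ))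
    refine Submodule.span_le.2 ?_
    rintro _ ⟨j, hj, rfl⟩
    rcases Nat.lt_succ_iff_lt_or_eq.1 hj with hjN | rfl
    · exact hmono (ih (apply_mem_Wlt P hjN))
    · rw [← sub_sub_cancel (e j) (P j)]
      exact sub_mem (Submodule.subset_span ⟨j, hj, rfl⟩) (hmono (ih (he j)))

end Wlt

section Lowering

variable {P : ℕ → H} {Δ : H →ₗ[ℝ] H}

lemma map_mem_Wlt_sub_one (hΔ0 : Δ (P 0) = 0) (hΔsucc : ∀ n, Δ (P (n + 1)) = P n)
    {n : ℕ} {u : H} (hu : u ∈ Wlt P n) : Δ u ∈ Wlt P (n - 1) := by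
  induction hu using Submodule.span_induction with
  | mem x hx =>
    obtain ⟨j, hj, rfl⟩ := hx
    cases j with
    | zero => simp [hΔ0]
    | succ k =>
      rw [hΔsucc]
      exact apply_mem_Wlt P (by simp only [Set.mem_Iio] at hj; omega)
  | zero => simp
  | add x y _ _ hx hy => rw [map_add]; exact add_mem hx hy
  | smul c x _ hx => rw [map_smul]; exact Submodule.smul_mem _ c hx

lemma pow_map_mem_Wlt_sub (hΔ0 : Δ (P 0) = 0) (hΔsucc : ∀ n, Δ (P (n + 1)) = P n)
    (k : ℕ) {n : ℕ} {u : H} (hu : u ∈ Wlt P n) : (Δ ^ k) u ∈ Wlt P (n - k) := by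
  induction k generalizing u n with
  | zero => simpa using hu
  | succ k ih =>
    rw [pow_succ, Module.End.mul_apply, ← Nat.sub_sub, Nat.sub_right_comm]
    exact ih (map_mem_Wlt_sub_one hΔ0 hΔsucc hu)

lemma mem_Wlt_succ_of_map_mem (hP : LinearIndependent ℝ P)
    (hΔ0 : Δ (P 0) = 0) (hΔsucc : ∀ n, Δ (P (n + 1)) = P n)
    {N : ℕ} {v : H} (hv : v ∈ Wlt P (N + 2)) (hΔv : Δ v ∈ Wlt P N) :
    v ∈ Wlt P (N + 1) := by
  have hIio : Set.Iio (N + 2) = insert (N + 1) (Set.Iio (N + 1)) := by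
    ext; simp only [Set.mem_Iio, Set.mem_insert_iff]; omega
  rw [Wlt, hIio, Set.image_insert_eq, Submodule.mem_span_insert] at hv
  obtain ⟨a, z, hz, rfl⟩ := hv
  replace hz : z ∈ Wlt P (N + 1) := hz
  have hΔz : Δ z ∈ Wlt P N := by simpa using map_mem_Wlt_sub_one hΔ0 hΔsucc hz
  have haP : a • P N ∈ Wlt P N := by
    have := sub_mem hΔv hΔz
    rwa [map_add, map_smul, hΔsucc, add_sub_cancel_right] at this
  obtain rfl : a = 0 := by
    by_contra ha
    exact apply_notMem_Wlt hP N ((Submodule.smul_mem_iff _ ha).1 haP)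
  simpa using hz

end Lowering

section Green

variable {P : ℕ → H} {Δ G : H →ₗ[ℝ] H}

lemma map_mem_Wlt_add_one (hGmap : ∀ n, ∀ u ∈ Wlt P (n + 1), G u ∈ Wlt P (n + 2))
    {n : ℕ} {u : H} (hu : u ∈ Wlt P n) : G u ∈ Wlt P (n + 1) := by
  cases n with
  | zero => simp_all [Wlt_zero]
  | succ k => exact hGmap k u hu

lemma pow_map_mem_Wlt_add (hGmap : ∀ n, ∀ u ∈ Wlt P (n + 1), G u ∈ Wlt P (n + 2))
    (k : ℕ) {n : ℕ} {u : H} (hu : u ∈ Wlt P n) : (G ^ k) u ∈ Wlt P (n + k) := by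
  induction k with
  | zero => simpa using hu
  | succ k ih =>
    rw [pow_succ', Module.End.mul_apply, ← add_assoc]
    exact map_mem_Wlt_add_one hGmap ih

lemma pow_map_mem_Wtot (hGmap : ∀ n, ∀ u ∈ Wlt P (n + 1), G u ∈ Wlt P (n + 2))
    (k : ℕ) {u : H} (hu : u ∈ Wtot P) : (G ^ k) u ∈ Wtot P := by
  obtain ⟨n, hn⟩ := exists_mem_Wlt_of_mem_Wtot hu
  exact Wlt_le_Wtot P _ (pow_map_mem_Wlt_add hGmap k hn)

lemma inner_pow_apply_comm (hGsym : ∀ u ∈ Wtot P, ∀ v ∈ Wtot P, ⟪ G u, v ⟫ = ⟪ u, G v ⟫)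
    (hGmap : ∀ n, ∀ u ∈ Wlt P (n + 1), G u ∈ Wlt P (n + 2))
    (k : ℕ) {u v : H} (hu : u ∈ Wtot P) (hv : v ∈ Wtot P) :
    ⟪ (G ^ k) u, v ⟫ = ⟪ u, (G ^ k) v ⟫ := by
  induction k generalizing v with
  | zero => simp
  | succ k ih =>
    have hGv : G v ∈ Wtot P := by simpa using pow_map_mem_Wtot hGmap 1 hv
    rw [pow_succ', Module.End.mul_apply, hGsym _ (pow_map_mem_Wtot hGmap k hu) v hv, ih hGv,
      ← Module.End.mul_apply, ← pow_succ, pow_succ']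

lemma pow_apply_pow_add (hGinv : ∀ u ∈ Wtot P, Δ (G u) = u)
    (hGmap : ∀ n, ∀ u ∈ Wlt P (n + 1), G u ∈ Wlt P (n + 2))
    (i ℓ : ℕ) {u : H} (hu : u ∈ Wtot P) : (Δ ^ ℓ) ((G ^ (i + ℓ)) u) = (G ^ i) u := by
  induction ℓ with
  | zero => simp
  | succ ℓ ih =>
    rw [pow_succ, Module.End.mul_apply, ← add_assoc, pow_succ', Module.End.mul_apply,
      hGinv _ (pow_map_mem_Wtot hGmap _ hu), ih]

lemma map_sub_mem_Wlt_of_sub_mem (hP : LinearIndependent ℝ P)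
    (hΔ0 : Δ (P 0) = 0) (hΔsucc : ∀ n, Δ (P (n + 1)) = P n)
    (hGinv : ∀ u ∈ Wtot P, Δ (G u) = u)
    (hGmap : ∀ n, ∀ u ∈ Wlt P (n + 1), G u ∈ Wlt P (n + 2))
    {k : ℕ} {u : H} (hu : u - P k ∈ Wlt P k) : G u - P (k + 1) ∈ Wlt P (k + 1) := by
  have hu' : u ∈ Wlt P (k + 1) := mem_Wlt_succ_of_sub_mem hu
  refine mem_Wlt_succ_of_map_mem hP hΔ0 hΔsucc ?_ ?_
  · exact sub_mem (map_mem_Wlt_add_one hGmap hu') (apply_mem_Wlt P (by omega))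
  · rwa [map_sub, hGinv u (Wlt_le_Wtot P _ hu'), hΔsucc]

lemma pow_map_sub_mem_Wlt_of_sub_mem (hP : LinearIndependent ℝ P)
    (hΔ0 : Δ (P 0) = 0) (hΔsucc : ∀ n, Δ (P (n + 1)) = P n)
    (hGinv : ∀ u ∈ Wtot P, Δ (G u) = u)
    (hGmap : ∀ n, ∀ u ∈ Wlt P (n + 1), G u ∈ Wlt P (n + 2))
    (m : ℕ) {k : ℕ} {u : H} (hu : u - P k ∈ Wlt P k) :
    (G ^ m) u - P (k + m) ∈ Wlt P (k + m) := by
  induction m with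
  | zero => simpa using hu
  | succ m ih =>
    rw [pow_succ', Module.End.mul_apply, ← add_assoc]
    exact map_sub_mem_Wlt_of_sub_mem hP hΔ0 hΔsucc hGinv hGmap ih

end Green

section Sobolev

noncomputable def sobolevForm (Δ : H →ₗ[ℝ] H) (χ : ℕ → ℝ) (m : ℕ) : LinearMap.BilinForm ℝ H :=
  ∑ ℓ ∈ Finset.range (m + 1), χ ℓ • (innerₗ H).compl₁₂ (Δ ^ ℓ) (Δ ^ ℓ)

variable {P : ℕ → H} {Δ G : H →ₗ[ℝ] H} {χ : ℕ → ℝ} {m : ℕ}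

lemma sobolevForm_apply (f g : H) : sobolevForm Δ χ m f g = innerSm Δ χ m f g := by
  simp [sobolevForm, innerSm, LinearMap.sum_apply]

lemma innerSm_comm (f g : H) : innerSm Δ χ m f g = innerSm Δ χ m g f :=
  Finset.sum_congr rfl fun _ _ => by rw [real_inner_comm]

lemma innerSm_self_pos (hχ0 : χ 0 = 1) (hχnn : ∀ ℓ, ℓ ≤ m → 0 ≤ χ ℓ)
    {f : H} (hf : f ≠ 0) : 0 < innerSm Δ χ m f f := by
  refine Finset.sum_pos' (fun ℓ hℓ => mul_nonneg (hχnn ℓ ?_) real_inner_self_nonneg)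
    ⟨0, by simp, by simp [hχ0, hf]⟩
  simpa [Nat.lt_succ_iff] using hℓ

lemma innerSm_pow_apply_eq_zero (hΔ0 : Δ (P 0) = 0) (hΔsucc : ∀ n, Δ (P (n + 1)) = P n)
    (hGsym : ∀ u ∈ Wtot P, ∀ v ∈ Wtot P, ⟪ G u, v ⟫ = ⟪ u, G v ⟫)
    (hGinv : ∀ u ∈ Wtot P, Δ (G u) = u)
    (hGmap : ∀ n, ∀ u ∈ Wlt P (n + 1), G u ∈ Wlt P (n + 2))
    {k j : ℕ} {q w : H} (hq : q ∈ Wtot P) (hqorth : ∀ v ∈ Wlt P k, ⟪ q, v ⟫ = 0)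
    (hw : w ∈ Wlt P j) (hjk : j + m ≤ k) : innerSm Δ χ m ((G ^ m) q) w = 0 := by
  refine Finset.sum_eq_zero fun ℓ hℓ => ?_
  obtain ⟨i, rfl⟩ : ∃ i, m = i + ℓ := ⟨m - ℓ, by simp at hℓ; omega⟩
  have hΔw : (Δ ^ ℓ) w ∈ Wlt P (j - ℓ) := pow_map_mem_Wlt_sub hΔ0 hΔsucc ℓ hw
  have hGΔw : (G ^ i) ((Δ ^ ℓ) w) ∈ Wlt P k :=
    Wlt_mono P (by omega) (pow_map_mem_Wlt_add hGmap i hΔw)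
  rw [pow_apply_pow_add hGinv hGmap i ℓ hq,
    inner_pow_apply_comm hGsym hGmap i hq (Wlt_le_Wtot P _ hΔw), hqorth _ hGΔw, mul_zero]

end Sobolev

theorem statement17_general
    (P : ℕ → H) (hP : LinearIndependent ℝ P)
    (Δ G : H →ₗ[ℝ] H)
    (hΔ0 : Δ (P 0) = 0) (hΔsucc : ∀ n, Δ (P (n + 1)) = P n)
    (hGsym : ∀ u ∈ Wtot P, ∀ v ∈ Wtot P, ⟪ G u, v ⟫ = ⟪ u, G v ⟫)
    (hGinv : ∀ u ∈ Wtot P, Δ (G u) = u)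
    (hGmap : ∀ n, ∀ u ∈ Wlt P (n + 1), G u ∈ Wlt P (n + 2))
    (m : ℕ)
    (χ : ℕ → ℝ) (hχ0 : χ 0 = 1) (hχnn : ∀ ℓ, ℓ ≤ m → 0 ≤ χ ℓ)
    (p st : ℕ → H)
    (hpmonic : ∀ n, p n - P n ∈ Wlt P n)
    (hportho : ∀ n, ∀ w ∈ Wlt P n, ⟪ p n, w ⟫ = 0)
    (hstmonic : ∀ n, st n - P n ∈ Wlt P n)
    (hstortho : ∀ n, ∀ w ∈ Wlt P n, innerSm Δ χ m (st n) w = 0) :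
    ∀ n : ℕ,
      (G ^ m) (p (n + 1)) = st (n + m + 1) +
        ∑ ℓ ∈ Finset.range (2 * m),
          (if ℓ ≤ n + m then
            (innerSm Δ χ m ((G ^ m) (p (n + 1))) (st (n + m - ℓ)) /
              innerSm Δ χ m (st (n + m - ℓ)) (st (n + m - ℓ))) • st (n + m - ℓ)
          else 0) := by
  intro n
  set q := (G ^ m) (p (n + 1))
  have hst_mem (j : ℕ) : st j ∈ Wlt P (j + 1) := mem_Wlt_succ_of_sub_mem (hstmonic j)
  have hq_monic : q - st (n + m + 1) ∈ Wlt P (n + m + 1) := by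
    have hq := pow_map_sub_mem_Wlt_of_sub_mem hP hΔ0 hΔsucc hGinv hGmap m (hpmonic (n + 1))
    rw [add_right_comm] at hq
    simpa using sub_mem hq (hstmonic (n + m + 1))
  have hst_orth : Pairwise fun i j => sobolevForm Δ χ m (st i) (st j) = 0 := by
    intro i j hij
    rw [sobolevForm_apply]
    rcases hij.lt_or_gt with h | h
    · rw [innerSm_comm]
      exact hstortho j _ (Wlt_mono P h (hst_mem i))
    · exact hstortho i _ (Wlt_mono P h (hst_mem j))
  have hst_self (j : ℕ) : sobolevForm Δ χ m (st j) (st j) ≠ 0 := by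
    rw [sobolevForm_apply]
    exact (innerSm_self_pos hχ0 hχnn (ne_zero_of_sub_mem_Wlt hP (hstmonic j))).ne'
  have hexp := (sobolevForm Δ χ m).eq_sum_of_mem_span hst_orth hst_self
    (s := Finset.range (n + m + 1)) (by simpa using Wlt_le_span_of_sub_mem hstmonic _ hq_monic)
  have hcoef (j : ℕ) (hj : j ∈ Finset.range (n + m + 1)) :
      sobolevForm Δ χ m (q - st (n + m + 1)) (st j) = innerSm Δ χ m q (st j) := by
    rw [map_sub, LinearMap.sub_apply, sobolevForm_apply, sobolevForm_apply,
      hstortho _ _ (Wlt_mono P (Finset.mem_range.1 hj) (hst_mem j)), sub_zero]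
  have hlow (j : ℕ) (hj : j + m ≤ n) : innerSm Δ χ m q (st j) = 0 :=
    innerSm_pow_apply_eq_zero hΔ0 hΔsucc hGsym hGinv hGmap
      (Wlt_le_Wtot P _ (mem_Wlt_succ_of_sub_mem (hpmonic (n + 1)))) (hportho (n + 1))
      (hst_mem j) (by omega)
  calc q = st (n + m + 1) + (q - st (n + m + 1)) := (add_sub_cancel _ _).symm
    _ = st (n + m + 1) + ∑ j ∈ Finset.range (n + m + 1),
          (innerSm Δ χ m q (st j) / innerSm Δ χ m (st j) (st j)) • st j := by
      rw [hexp]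
      exact congrArg _ (Finset.sum_congr rfl fun j hj => by rw [hcoef j hj, sobolevForm_apply])
    _ = _ := by
      rw [Finset.sum_range_eq_sum_range_reflect_of_eq_zero _ n m fun j hj => by
        rw [hlow j hj, zero_div, zero_smul]]

/-- Generalized recurrence for higher-order Sobolev orthogonal polynomials:
for every `n ≥ 0`, `𝒢^m p_{n+1} = s̃_{n+m+1} + Σ_{ℓ=0}^{2m-1} a_{n,ℓ} s̃_{n+m-ℓ}`,
terms with negative index being `0`. -/
theorem statement17
    (P : ℕ → H) (hP : LinearIndependent ℝ P)
    (Δ G : H →ₗ[ℝ] H)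
    (hΔ0 : Δ (P 0) = 0) (hΔsucc : ∀ n, Δ (P (n + 1)) = P n)
    (hGsym : ∀ u ∈ Wtot P, ∀ v ∈ Wtot P, ⟪ G u, v ⟫ = ⟪ u, G v ⟫)
    (hGinv : ∀ u ∈ Wtot P, Δ (G u) = u)
    (hGmap : ∀ n, ∀ u ∈ Wlt P (n + 1), G u ∈ Wlt P (n + 2))
    (m : ℕ) (hm : 1 ≤ m)
    (χ : ℕ → ℝ) (hχ0 : χ 0 = 1) (hχnn : ∀ ℓ, ℓ ≤ m → 0 ≤ χ ℓ)
    (p st : ℕ → H)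
    (hpmonic : ∀ n, p n - P n ∈ Wlt P n)
    (hportho : ∀ n, ∀ w ∈ Wlt P n, ⟪ p n, w ⟫ = 0)
    (hstmonic : ∀ n, st n - P n ∈ Wlt P n)
    (hstortho : ∀ n, ∀ w ∈ Wlt P n, innerSm Δ χ m (st n) w = 0) :
    ∀ n : ℕ,
      (G ^ m) (p (n + 1)) = st (n + m + 1) +
        ∑ ℓ ∈ Finset.range (2 * m),
          (if ℓ ≤ n + m then
            (innerSm Δ χ m ((G ^ m) (p (n + 1))) (st (n + m - ℓ)) /
              innerSm Δ χ m (st (n + m - ℓ)) (st (n + m - ℓ))) • st (n + m - ℓ)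
          else 0) :=
  statement17_general P hP Δ G hΔ0 hΔsucc hGsym hGinv hGmap m χ hχ0 hχnn p st hpmonic hportho
    hstmonic hstortho
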